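/- Let n ≥ m ≥ 1 with n ≥ 6m + 7. Then gr_3(K_3 : S(n,m)) = 5·(n/2) + 1 if n is even, and gr_3(K_3 : S(n,m)) = 5·((n-1)/2) + 2 if n is odd; in other words, every 3-edge-coloring of the complete graph on that many vertices contains either a rainbow triangle or a monochromatic copy of S(n,m), and there is a 3-coloring of the complete graph on one fewer vertex avoiding both. -/

import Mathlib

open Finset

/-- A symmetric edge-coloring of a complete graph, given as a function on ordered
pairs of vertices. -/
def IsSymmColoring {V C : Type*} (c : V → V → C) : Prop := ∀ u v, c u v = c v u

/-- The coloring `c` contains a rainbow triangle: three vertices whose three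
connecting edges get three distinct colors. -/
def HasRainbowTriangle {V C : Type*} (c : V → V → C) : Prop :=
  ∃ u v w : V, u ≠ v ∧ u ≠ w ∧ v ≠ w ∧
    c u v ≠ c u w ∧ c u v ≠ c v w ∧ c u w ≠ c v w

/-- The coloring `c` contains a monochromatic triangle. -/
def HasMonoTriangle {V C : Type*} (c : V → V → C) : Prop :=
  ∃ u v w : V, u ≠ v ∧ u ≠ w ∧ v ≠ w ∧ c u v = c u w ∧ c u v = c v w

/-- The coloring `c` contains a monochromatic copy of the double star `S(n,m)`:
two adjacent centers `u, v`, a set `A` of `n` further leaves at `u` and a set `B`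
of `m` further leaves at `v`, all edges in one color. -/
def HasMonoDoubleStar {V C : Type*} (c : V → V → C) (n m : ℕ) : Prop :=
  ∃ (u v : V) (A B : Finset V) (col : C),
    u ≠ v ∧ A.card = n ∧ B.card = m ∧ Disjoint A B ∧
    u ∉ A ∧ u ∉ B ∧ v ∉ A ∧ v ∉ B ∧
    c u v = col ∧ (∀ a ∈ A, c u a = col) ∧ (∀ b ∈ B, c v b = col)

/-- Every `k`-edge-coloring of the complete graph on `N` vertices contains a
rainbow triangle or a monochromatic `S(n,m)` (so `gr_k(K_3 : S(n,m)) ≤ N`). -/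
def grHolds (k n m N : ℕ) : Prop :=
  ∀ c : Fin N → Fin N → Fin k, IsSymmColoring c →
    HasRainbowTriangle c ∨ HasMonoDoubleStar c n m

/-- There is a `k`-edge-coloring of the complete graph on `N` vertices with no
rainbow triangle and no monochromatic `S(n,m)` (so `gr_k(K_3 : S(n,m)) > N`). -/
def grAvoid (k n m N : ℕ) : Prop :=
  ∃ c : Fin N → Fin N → Fin k, IsSymmColoring c ∧
    ¬ HasRainbowTriangle c ∧ ¬ HasMonoDoubleStar c n m

/-!
Call a vertex huge in colour `μ` if it has more than `n + m` neighbours of colour `μ`, and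
tiny if it has at most `m`. Let `N > 5 ⌊n/2⌋ + (n mod 2)` and take a colouring of `K_N` with
neither a rainbow triangle nor a monochromatic `S(n,m)`.

No vertex is huge: the `μ`-neighbours of a huge vertex are `μ`-tiny, so at least half of them are
huge in one other colour `j`, and double counting the `j`-edges leaving this set contradicts
`n ≥ 6m + 7`.

By Gallai's theorem some colour `κ` is disconnected, and its components are modules: an outside
vertex sees a whole component in one colour. A vertex `x` sees at most `n` vertices outside
its own component in each colour `μ ≠ κ`, since otherwise `x`, such a vertex `y` and the
component of `x` form a double star. Contracting the components gives a `2`-coloured complete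
graph weighted by component sizes, in which every vertex sees weight at most `n` per colour;
such a graph weighs at most `5 ⌊n/2⌋ + (n mod 2)`.

For the lower bound, blow up the `2`-colouring of `K₅` by two pentagons into parts of size
`⌊n/2⌋` (one of them one larger if `n` is odd) and use the third colour inside the parts: there
is no rainbow triangle, and every colour degree is at most `n`.
-/

section ColorNbhd

variable {V C : Type*} [Fintype V] [DecidableEq V] [DecidableEq C]

def colorNbhd (c : V → V → C) (μ : C) (u : V) : Finset V := {x ∈ univ.erase u | c u x = μ}

@[simp] lemma mem_colorNbhd {c : V → V → C} {μ : C} {u x : V} :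
    x ∈ colorNbhd c μ u ↔ x ≠ u ∧ c u x = μ := by
  simp [colorNbhd]

lemma sum_card_colorNbhd [Fintype C] (c : V → V → C) (u : V) :
    ∑ μ, #(colorNbhd c μ u) = Fintype.card V - 1 := by
  rw [← card_univ, ← card_erase_of_mem (mem_univ u)]
  exact (card_eq_sum_card_fiberwise fun _ _ => mem_univ _).symm

lemma card_colorNbhd_add_add (c : V → V → Fin 3) (u : V) {i j k : Fin 3}
    (hij : i ≠ j) (hik : i ≠ k) (hjk : j ≠ k) :
    #(colorNbhd c i u) + #(colorNbhd c j u) + #(colorNbhd c k u) = Fintype.card V - 1 := by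
  rw [← sum_card_colorNbhd c u, Fin.sum_univ_three]
  fin_cases i <;> fin_cases j <;> fin_cases k <;> simp_all <;> omega

end ColorNbhd

lemma Finset.exists_subset_card_eq_le_card_sdiff {α : Type*} [DecidableEq α] {X Y : Finset α}
    {n m : ℕ} (hn : n ≤ #X) (hm : m ≤ #Y) (hnm : n + m ≤ #(X ∪ Y)) :
    ∃ A ⊆ X, #A = n ∧ m ≤ #(Y \ A) := by
  by_cases hXY : n ≤ #(X \ Y)
  · obtain ⟨A, hA, rfl⟩ := exists_subset_card_eq hXY
    refine ⟨A, hA.trans sdiff_subset, rfl, ?_⟩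
    rwa [sdiff_eq_self_of_disjoint (disjoint_sdiff_self_left.mono_left hA).symm]
  · obtain ⟨A, hXYA, hAX, rfl⟩ :=
      exists_subsuperset_card_eq (sdiff_subset : X \ Y ⊆ X) (by omega) hn
    refine ⟨A, hAX, rfl, ?_⟩
    have hAY : A \ Y = X \ Y := (sdiff_subset_sdiff hAX le_rfl).antisymm
      (fun x hx => mem_sdiff.2 ⟨hXYA hx, (mem_sdiff.1 hx).2⟩)
    have := card_sdiff_add_card_inter A Y
    have := card_sdiff_add_card_inter Y A
    have := card_sdiff_add_card X Y
    rw [hAY, inter_comm Y A] at *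
    omega

lemma hasMonoDoubleStar_of_le_card {V C : Type*} [DecidableEq V] {c : V → V → C} {n m : ℕ}
    {u v : V} {X Y : Finset V} (huv : u ≠ v) (hX : ∀ x ∈ X, c u x = c u v)
    (hY : ∀ y ∈ Y, c v y = c u v) (hu : u ∉ X ∪ Y) (hv : v ∉ X ∪ Y)
    (hn : n ≤ #X) (hm : m ≤ #Y) (hnm : n + m ≤ #(X ∪ Y)) : HasMonoDoubleStar c n m := by
  obtain ⟨A, hAX, hA, hYA⟩ := exists_subset_card_eq_le_card_sdiff hn hm hnm
  obtain ⟨B, hBY, hB⟩ := exists_subset_card_eq hYA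
  have hBY' : B ⊆ Y := hBY.trans sdiff_subset
  simp only [mem_union, not_or] at hu hv
  exact ⟨u, v, A, B, c u v, huv, hA, hB, disjoint_of_subset_right hBY disjoint_sdiff,
    fun h => hu.1 (hAX h), fun h => hu.2 (hBY' h), fun h => hv.1 (hAX h),
    fun h => hv.2 (hBY' h), rfl, fun a ha => hX a (hAX ha), fun b hb => hY b (hBY' hb)⟩

lemma fin_three_eq_or_eq_or_eq {i j k : Fin 3} (hij : i ≠ j) (hik : i ≠ k) (hjk : j ≠ k)
    (x : Fin 3) : x = i ∨ x = j ∨ x = k := by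
  revert i j k x; decide

lemma fin_three_exists_ne (i j : Fin 3) : ∃ k, i ≠ k ∧ j ≠ k := by
  revert i j; decide

section Huge

variable {V : Type*} [Fintype V] [DecidableEq V] {n m : ℕ}

lemma card_colorNbhd_le_of_huge {C : Type*} [DecidableEq C] {c : V → V → C}
    (hDS : ¬ HasMonoDoubleStar c n m) {u v : V} {μ : C}
    (huv : u ≠ v) (hc : c u v = μ) (hu : n + m < #(colorNbhd c μ u)) :
    #(colorNbhd c μ v) ≤ m := by
  by_contra! hv
  refine hDS (hasMonoDoubleStar_of_le_card (X := (colorNbhd c μ u).erase v)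
    (Y := (colorNbhd c μ v).erase u) huv ?_ ?_ ?_ ?_ ?_ ?_ ?_)
  · intro x hx; simp_all
  · intro y hy; simp_all
  · simp
  · simp
  · have := pred_card_le_card_erase (s := colorNbhd c μ u) (a := v); omega
  · have := pred_card_le_card_erase (s := colorNbhd c μ v) (a := u); omega
  · have := pred_card_le_card_erase (s := colorNbhd c μ u) (a := v)
    have := card_le_card (subset_union_left (s₁ := (colorNbhd c μ u).erase v)
      (s₂ := (colorNbhd c μ v).erase u))
    omega

variable {c : V → V → Fin 3}

/-- Double counting the `j`-edges between `A` and its complement: a vertex of `A` has no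
`j`-neighbour in `A` and cannot be huge in the third colour `k` (its many `k`-neighbours in `A`
would then be tiny), while a vertex outside `A` with a `j`-neighbour in `A` is `j`-tiny. -/
lemma card_mul_le_of_huge_of_tiny (hsym : IsSymmColoring c) (hDS : ¬ HasMonoDoubleStar c n m)
    {i j : Fin 3} (hij : i ≠ j) {A : Finset V}
    (hhuge : ∀ a ∈ A, n + m < #(colorNbhd c j a))
    (htiny : ∀ a ∈ A, #(colorNbhd c i a) ≤ m)
    (hA : 2 * m + 1 < #A) :
    #A * (Fintype.card V - (n + 2 * m + 1)) ≤ #Aᶜ * m := by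
  obtain ⟨k, hik, hjk⟩ := fin_three_exists_ne i j
  have hnoj : ∀ a ∈ A, ∀ b ∈ A, a ≠ b → c a b ≠ j := fun a ha b hb hab hc =>
    (card_colorNbhd_le_of_huge hDS hab hc (hhuge a ha)).not_gt (by linarith [hhuge b hb])
  have hkA : ∀ a ∈ A, #A ≤ #(A ∩ colorNbhd c k a) + m + 1 := by
    intro a ha
    have hsub : A.erase a ⊆ (A ∩ colorNbhd c k a) ∪ colorNbhd c i a := by
      intro x hx
      obtain ⟨hxa, hxA⟩ := mem_erase.1 hx
      rcases fin_three_eq_or_eq_or_eq hij hik hjk (c a x) with h | h | h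
      · simp [hxa, h]
      · exact absurd h (hnoj a ha x hxA (Ne.symm hxa))
      · simp [hxa, h, hxA]
    have := (card_le_card hsub).trans (card_union_le _ _)
    have := card_erase_of_mem ha
    have := htiny a ha
    omega
  have hk : ∀ a ∈ A, #(colorNbhd c k a) ≤ n + m := by
    intro a ha
    by_contra! h
    obtain ⟨b, hb⟩ : (A ∩ colorNbhd c k a).Nonempty := card_pos.1 (by linarith [hkA a ha])
    obtain ⟨hbA, hba, hab⟩ : b ∈ A ∧ b ≠ a ∧ c a b = k := by simpa [and_assoc] using hb
    have := card_colorNbhd_le_of_huge hDS (Ne.symm hba) hab h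
    have := card_le_card (inter_subset_right (s₁ := A) (s₂ := colorNbhd c k b))
    linarith [hkA b hbA]
  refine card_mul_le_card_mul (fun a x => c a x = j) (fun a ha => ?_) (fun x hx => ?_)
  · have hsub : colorNbhd c j a ⊆ Aᶜ.bipartiteAbove (fun a x => c a x = j) a := by
      intro x hx
      obtain ⟨hxa, hax⟩ := mem_colorNbhd.1 hx
      simp only [bipartiteAbove, mem_filter, mem_compl]
      exact ⟨fun hxA => hnoj a ha x hxA (Ne.symm hxa) hax, hax⟩
    have := card_le_card hsub
    have := card_colorNbhd_add_add c a hij hik hjk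
    have := htiny a ha
    have := hk a ha
    omega
  · rcases (A.bipartiteBelow (fun a x => c a x = j) x).eq_empty_or_nonempty with h | ⟨a, ha⟩
    · simp [h]
    obtain ⟨haA, hax⟩ := mem_filter.1 ha
    have hxa : a ≠ x := fun h => mem_compl.1 hx (h ▸ haA)
    refine le_trans (card_le_card fun b hb => ?_)
      (card_colorNbhd_le_of_huge hDS hxa hax (hhuge a haA))
    obtain ⟨hbA, hbx⟩ := mem_filter.1 hb
    exact mem_colorNbhd.2 ⟨fun h => mem_compl.1 hx (h ▸ hbA), hsym x b ▸ hbx⟩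

lemma card_colorNbhd_le_of_not_hasMonoDoubleStar (hsym : IsSymmColoring c)
    (hDS : ¬ HasMonoDoubleStar c n m) (hn : 6 * m + 7 ≤ n)
    (hV : 5 * (n / 2) + n % 2 < Fintype.card V) (u : V) (i : Fin 3) :
    #(colorNbhd c i u) ≤ n + m := by
  by_contra! hu
  have hV' : 5 * n ≤ 2 * Fintype.card V + 1 := by omega
  set W := colorNbhd c i u
  have htiny : ∀ w ∈ W, #(colorNbhd c i w) ≤ m := fun w hw =>
    card_colorNbhd_le_of_huge hDS (mem_colorNbhd.1 hw).1.symm (mem_colorNbhd.1 hw).2 hu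
  have hsmall : ∀ j, i ≠ j → ∀ A ⊆ W, (∀ a ∈ A, n + m < #(colorNbhd c j a)) →
      2 * #A ≤ n + m := by
    intro j hij A hAW hhuge
    by_contra! hA
    have h := card_mul_le_of_huge_of_tiny hsym hDS hij hhuge (fun a ha => htiny a (hAW ha))
      (by omega)
    rw [card_compl] at h
    have hN : n + 2 * m + 1 ≤ Fintype.card V := by omega
    have haN := card_le_univ A
    generalize #A = a at h hA haN
    -- `(n + m + 1) (N - n - m - 1) ≤ 2 N m` contradicts `2 N ≥ 5 n - 1` and `n ≥ 6 m + 7`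
    zify [hN, haN] at h
    have : ((n : ℤ) + m + 1) * (Fintype.card V - n - m - 1) ≤ 2 * Fintype.card V * m := by
      nlinarith
    nlinarith
  obtain ⟨j, hij, -⟩ := fin_three_exists_ne i i
  obtain ⟨k, hik, hjk⟩ := fin_three_exists_ne i j
  have hcover : W ⊆
      {w ∈ W | n + m < #(colorNbhd c j w)} ∪ {w ∈ W | n + m < #(colorNbhd c k w)} := by
    intro w hw
    have := card_colorNbhd_add_add c w hij hik hjk
    have := htiny w hw
    simp only [mem_union, mem_filter, hw, true_and]
    omega
  have := (card_le_card hcover).trans (card_union_le _ _)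
  have := hsmall j hij _ (filter_subset _ _) (fun a ha => (mem_filter.1 ha).2)
  have := hsmall k hik _ (filter_subset _ _) (fun a ha => (mem_filter.1 ha).2)
  omega

end Huge

section Gallai

variable {V C : Type*}

def ColorReach (c : V → V → C) (κ : C) (S : Finset V) : V → V → Prop :=
  Relation.ReflTransGen fun a b => a ∈ S ∧ b ∈ S ∧ a ≠ b ∧ c a b = κ

variable {c : V → V → C} {κ : C} {S W : Finset V} {x y z w : V}

namespace ColorReach

lemma refl (x : V) : ColorReach c κ S x x := Relation.ReflTransGen.refl

lemma single (hx : x ∈ S) (hy : y ∈ S) (hxy : x ≠ y) (h : c x y = κ) :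
    ColorReach c κ S x y :=
  Relation.ReflTransGen.single ⟨hx, hy, hxy, h⟩

lemma tail (hxy : ColorReach c κ S x y) (hy : y ∈ S) (hz : z ∈ S) (hyz : y ≠ z)
    (h : c y z = κ) : ColorReach c κ S x z :=
  Relation.ReflTransGen.tail hxy ⟨hy, hz, hyz, h⟩

lemma trans (hxy : ColorReach c κ S x y) (hyz : ColorReach c κ S y z) : ColorReach c κ S x z :=
  Relation.ReflTransGen.trans hxy hyz

lemma symm (hsym : IsSymmColoring c) (h : ColorReach c κ S x y) : ColorReach c κ S y x := by
  induction h with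
  | refl => exact .refl _
  | tail _ hstep ih =>
    obtain ⟨ha, hb, hab, h⟩ := hstep
    exact Relation.ReflTransGen.head ⟨hb, ha, hab.symm, hsym _ _ ▸ h⟩ ih

lemma eq_of_forall_ne (h : ∀ z ∈ S, z ≠ x → c x z ≠ κ) (hxy : ColorReach c κ S x y) :
    y = x := by
  induction hxy with
  | refl => rfl
  | tail _ hstep ih =>
    subst ih
    exact absurd hstep.2.2.2 (h _ hstep.2.1 hstep.2.2.1.symm)

lemma color_eq (hGal : ¬ HasRainbowTriangle c) (hxy : ColorReach c κ S x y) (hz : z ∈ S)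
    (hxz : ¬ ColorReach c κ S x z) : c y z = c x z := by
  induction hxy with
  | refl => rfl
  | @tail b y hxb hby ih =>
    obtain ⟨hb, hy, hne, hκ⟩ := hby
    rw [← ih]
    have hzb : b ≠ z := by rintro rfl; exact hxz hxb
    have hxy : ColorReach c κ S x y := ColorReach.tail hxb hb hy hne hκ
    have hyz : y ≠ z := by rintro rfl; exact hxz hxy
    have hbz : c b z ≠ κ := fun h => hxz (ColorReach.tail hxb hb hz hzb h)
    have hyz' : c y z ≠ κ := fun h => hxz (hxy.tail hy hz hyz h)
    by_contra h
    exact hGal ⟨b, y, z, hne, hzb, hyz, hκ ▸ Ne.symm hbz, hκ ▸ Ne.symm hyz', Ne.symm h⟩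

lemma equivalence (hsym : IsSymmColoring c) (S : Finset V) : Equivalence (ColorReach c κ S) :=
  ⟨.refl, .symm hsym, .trans⟩

end ColorReach

lemma not_colorReach_insert [DecidableEq V] (hw : w ∈ W) (hx : x ∉ W)
    (h : ∀ z ∈ W, ColorReach c κ W w z → c z x ≠ κ) :
    ¬ ColorReach c κ (insert x W) w x := by
  suffices ∀ y, ColorReach c κ (insert x W) w y → y ∈ W ∧ ColorReach c κ W w y from
    fun hwx => hx (this x hwx).1
  intro y hwy
  induction hwy with
  | refl => exact ⟨hw, .refl w⟩
  | @tail a b _ hab ih =>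
    obtain ⟨ha, hb, hne, hκ⟩ := hab
    have hbx : b ≠ x := by rintro rfl; exact h a ih.1 ih.2 hκ
    have hbW : b ∈ W := (mem_insert.1 hb).resolve_left hbx
    exact ⟨hbW, ih.2.tail ih.1 hbW hne hκ⟩

lemma color_eq_of_forall_exists_colorReach (hsym : IsSymmColoring c)
    (hGal : ¬ HasRainbowTriangle c) (hx : x ∉ W) {a b : V} (ha : a ∈ W) (hb : b ∈ W)
    (hab : ¬ ColorReach c κ W a b)
    (hlink : ∀ w ∈ W, ∃ z ∈ W, ColorReach c κ W w z ∧ c z x = κ) {w w' : V}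
    (hw : w ∈ W) (hw' : w' ∈ W) (hxw : c x w ≠ κ) (hxw' : c x w' ≠ κ) : c x w = c x w' := by
  have hne : ∀ {v}, v ∈ W → x ≠ v := fun hv h => hx (h ▸ hv)
  -- otherwise `x`, `z`, `v` would be a rainbow triangle
  have hvia : ∀ z ∈ W, c z x = κ → ∀ v ∈ W, ¬ ColorReach c κ W z v → c x v ≠ κ →
      c x v = c z v := by
    intro z hz hzx v hv hzv hxv
    have hzv' : z ≠ v := by rintro rfl; exact hzv (.refl z)
    by_contra h
    exact hGal ⟨x, z, v, hne hz, hne hv, hzv', (hsym x z ▸ hzx) ▸ Ne.symm hxv,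
      (hsym x z ▸ hzx) ▸ fun h' => hzv (.single hz hv hzv' h'.symm), h⟩
  by_cases hww' : ColorReach c κ W w w'
  · obtain ⟨v, hv, hwv⟩ : ∃ v ∈ W, ¬ ColorReach c κ W w v := by
      by_cases hwa : ColorReach c κ W w a
      · exact ⟨b, hb, fun hwb => hab ((hwa.symm hsym).trans hwb)⟩
      · exact ⟨a, ha, hwa⟩
    obtain ⟨z, hz, hvz, hzx⟩ := hlink v hv
    have hwz : ¬ ColorReach c κ W w z := fun h => hwv (h.trans (hvz.symm hsym))
    have hzw : ¬ ColorReach c κ W z w := fun h => hwz (h.symm hsym)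
    have hzw' : ¬ ColorReach c κ W z w' := fun h => hwz (hww'.trans (h.symm hsym))
    rw [hvia z hz hzx w hw hzw hxw, hvia z hz hzx w' hw' hzw' hxw', hsym z w, hsym z w',
      ColorReach.color_eq hGal hww' hz hwz]
  · obtain ⟨z, hz, hw'z, hzx⟩ := hlink w' hw'
    obtain ⟨z', hz', hwz', hz'x⟩ := hlink w hw
    have hzw : ¬ ColorReach c κ W z w := fun h => hww' ((hw'z.trans h).symm hsym)
    have hz'w' : ¬ ColorReach c κ W z' w' := fun h => hww' (hwz'.trans h)
    rw [hvia z hz hzx w hw hzw hxw, hvia z' hz' hz'x w' hw' hz'w' hxw',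
      ColorReach.color_eq hGal hw'z hw (fun h => hww' (h.symm hsym)),
      ColorReach.color_eq hGal hwz' hw' hww', hsym]

/-- Gallai. When `x` is added to `W`, either some `κ`-component of `W` has no `κ`-edge to `x`,
or `x` sees `W` in only two colours and is isolated in the third. -/
theorem exists_not_colorReach [DecidableEq V] {c : V → V → Fin 3} (hsym : IsSymmColoring c)
    (hGal : ¬ HasRainbowTriangle c) {S : Finset V} (hS : 2 ≤ #S) :
    ∃ κ, ∃ x ∈ S, ∃ y ∈ S, ¬ ColorReach c κ S x y := by
  induction S using Finset.induction_on with
  | empty => simp at hS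
  | @insert x W hx ih =>
    rw [card_insert_of_notMem hx] at hS
    rcases lt_or_ge #W 2 with hW | hW
    · obtain ⟨y, rfl⟩ := card_eq_one.1 (by omega : #W = 1)
      obtain ⟨κ, hκ, -⟩ := fin_three_exists_ne (c y x) (c y x)
      refine ⟨κ, y, by simp, x, by simp, not_colorReach_insert (mem_singleton_self y) hx ?_⟩
      intro z hz _
      rwa [mem_singleton.1 hz]
    obtain ⟨κ, a, ha, b, hb, hab⟩ := ih hW
    by_cases hiso : ∃ w ∈ W, ∀ z ∈ W, ColorReach c κ W w z → c z x ≠ κ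
    · obtain ⟨w, hw, h⟩ := hiso
      exact ⟨κ, w, mem_insert_of_mem hw, x, mem_insert_self x W, not_colorReach_insert hw hx h⟩
    push Not at hiso
    obtain ⟨γ, hγ⟩ : ∃ γ, ∀ w ∈ W, c x w = κ ∨ c x w = γ := by
      by_cases hall : ∀ w ∈ W, c x w = κ
      · exact ⟨κ, fun w hw => .inl (hall w hw)⟩
      push Not at hall
      obtain ⟨w₀, hw₀, hxw₀⟩ := hall
      exact ⟨c x w₀, fun w hw => or_iff_not_imp_left.2 fun hxw =>
        color_eq_of_forall_exists_colorReach hsym hGal hx ha hb hab hiso hw hw₀ hxw hxw₀⟩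
    obtain ⟨ι, hκι, hγι⟩ := fin_three_exists_ne κ γ
    refine ⟨ι, x, mem_insert_self x W, a, mem_insert_of_mem ha, fun hxa => ?_⟩
    refine hx (ColorReach.eq_of_forall_ne (fun z hz hzx hxz => ?_) hxa ▸ ha)
    rcases hγ z ((mem_insert.1 hz).resolve_left hzx) with h | h
    · exact hκι (h ▸ hxz)
    · exact hγι (h ▸ hxz)

end Gallai

section TwoColoring

variable {ι C : Type*} {α β : C}

lemma eq_or_eq_or_eq_of_two_colors {x y z : C} (hx : x = α ∨ x = β) (hy : y = α ∨ y = β)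
    (hz : z = α ∨ z = β) : x = y ∨ x = z ∨ y = z := by
  rcases hx with rfl | rfl <;> rcases hy with rfl | rfl <;> rcases hz with rfl | rfl <;> simp

lemma exists_ne_eq_of_two_lt_card {s : Finset ι} {f : ι → C}
    (hf : ∀ t ∈ s, f t = α ∨ f t = β) (hs : 2 < #s) : ∃ u ∈ s, ∃ v ∈ s, u ≠ v ∧ f u = f v := by
  obtain ⟨x, hx, y, hy, z, hz, hxy, hxz, hyz⟩ := two_lt_card.1 hs
  rcases eq_or_eq_or_eq_of_two_colors (hf x hx) (hf y hy) (hf z hz) with h | h | h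
  exacts [⟨x, hx, y, hy, hxy, h⟩, ⟨x, hx, z, hz, hxz, h⟩, ⟨y, hy, z, hz, hyz, h⟩]

lemma sum_le_of_card_eq_five [DecidableEq ι] {R : Finset ι} {q : ι → ℕ} {n : ℕ}
    (hR : #R = 5) (hq : ∀ a ∈ R, ∀ b ∈ R, a ≠ b → q a + q b ≤ n) :
    ∑ r ∈ R, q r ≤ 5 * (n / 2) + n % 2 := by
  obtain ⟨a, ha, hmax⟩ := exists_max_image R q (card_pos.1 (by omega))
  have h5 : ∑ r ∈ R, q r ≤ 5 * q a := by
    simpa [hR] using sum_le_card_nsmul R q (q a) hmax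
  have h4 : ∑ r ∈ R.erase a, q r + 4 * q a ≤ 4 * n := by
    have := sum_le_card_nsmul (R.erase a) (fun r => q r + q a) n fun b hb =>
      add_comm (q a) _ ▸ hq a ha b (mem_of_mem_erase hb) (ne_of_mem_erase hb).symm
    simpa [sum_add_distrib, card_erase_of_mem ha, hR, mul_comm] using this
  have := add_sum_erase R q ha
  by_contra!
  have : n / 2 + 1 ≤ q a := by omega
  omega

variable [DecidableEq ι] {R : Finset ι} {d : ι → ι → C} {q : ι → ℕ} {n : ℕ} {a b u v : ι}

lemma le_of_forall_sum_le
    (hmono : ∀ a ∈ R, ∀ μ, ∀ T ⊆ R.erase a, (∀ t ∈ T, d a t = μ) → ∑ t ∈ T, q t ≤ n)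
    (ha : a ∈ R) (hb : b ∈ R) (hab : a ≠ b) : q b ≤ n := by
  simpa using hmono a ha (d a b) {b} (by simp [hb, Ne.symm hab]) (by simp)

lemma add_le_of_forall_sum_le
    (hmono : ∀ a ∈ R, ∀ μ, ∀ T ⊆ R.erase a, (∀ t ∈ T, d a t = μ) → ∑ t ∈ T, q t ≤ n)
    (ha : a ∈ R) (hu : u ∈ R) (hv : v ∈ R) (hau : a ≠ u) (hav : a ≠ v) (huv : u ≠ v)
    (h : d a u = d a v) : q u + q v ≤ n := by
  simpa [sum_pair huv] using hmono a ha (d a u) {u, v}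
    (by simp [insert_subset_iff, hu, hv, Ne.symm hau, Ne.symm hav]) (by simp [h])

lemma sum_le_add_two_mul (hd : ∀ a ∈ R, ∀ b ∈ R, a ≠ b → d a b = α ∨ d a b = β)
    (hmono : ∀ a ∈ R, ∀ μ, ∀ T ⊆ R.erase a, (∀ t ∈ T, d a t = μ) → ∑ t ∈ T, q t ≤ n)
    (ha : a ∈ R) : ∑ r ∈ R, q r ≤ q a + 2 * n := by
  classical
  have hsplit : R.erase a ⊆ {t ∈ R.erase a | d a t = α} ∪ {t ∈ R.erase a | d a t = β} := by
    intro t ht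
    rcases hd a ha t (mem_of_mem_erase ht) (ne_of_mem_erase ht).symm with h | h <;> simp [ht, h]
  have h1 := hmono a ha α _ (filter_subset _ _) fun t ht => (mem_filter.1 ht).2
  have h2 := hmono a ha β _ (filter_subset _ _) fun t ht => (mem_filter.1 ht).2
  have h3 := sum_le_sum_of_subset (f := q) hsplit
  have h4 := sum_union_inter (s₁ := {t ∈ R.erase a | d a t = α})
    (s₂ := {t ∈ R.erase a | d a t = β}) (f := q)
  have := add_sum_erase R q ha
  omega

lemma sum_le_of_card_eq_three (hsymm : ∀ a b, d a b = d b a)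
    (hd : ∀ a ∈ R, ∀ b ∈ R, a ≠ b → d a b = α ∨ d a b = β)
    (hmono : ∀ a ∈ R, ∀ μ, ∀ T ⊆ R.erase a, (∀ t ∈ T, d a t = μ) → ∑ t ∈ T, q t ≤ n)
    (hR : #R = 3) : ∑ r ∈ R, q r ≤ 2 * n := by
  obtain ⟨x, y, z, hxy, hxz, hyz, rfl⟩ := card_eq_three.1 hR
  rw [sum_insert (by simp [hxy, hxz]), sum_pair hyz]
  have hx : x ∈ ({x, y, z} : Finset ι) := by simp
  have hy : y ∈ ({x, y, z} : Finset ι) := by simp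
  have hz : z ∈ ({x, y, z} : Finset ι) := by simp
  rcases eq_or_eq_or_eq_of_two_colors (hd x hx y hy hxy) (hd x hx z hz hxz)
    (hd y hy z hz hyz) with h | h | h
  · have := add_le_of_forall_sum_le hmono hx hy hz hxy hxz hyz h
    have := le_of_forall_sum_le hmono hy hx hxy.symm
    omega
  · have := add_le_of_forall_sum_le hmono hy hx hz hxy.symm hyz hxz (hsymm x y ▸ h)
    have := le_of_forall_sum_le hmono hx hy hxy
    omega
  · have := add_le_of_forall_sum_le hmono hz hx hy hxz.symm hyz.symm hxy
      (by rw [hsymm z x, hsymm z y, h])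
    have := le_of_forall_sum_le hmono hx hz hxz
    omega

/-- The cherry at `a` with leaves `u`, `v` gives a cherry with leaves `a`, `b` centred at `u` or
`v`: otherwise `a` or `b` would see three vertices in one colour. -/
lemma add_le_of_color_eq [DecidableEq C] (hsymm : ∀ a b, d a b = d b a)
    (hd : ∀ a ∈ R, ∀ b ∈ R, a ≠ b → d a b = α ∨ d a b = β)
    (hthree : ∀ a ∈ R, ∀ μ, #{t ∈ R.erase a | d a t = μ} ≤ 2)
    (hmono : ∀ a ∈ R, ∀ μ, ∀ T ⊆ R.erase a, (∀ t ∈ T, d a t = μ) → ∑ t ∈ T, q t ≤ n)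
    (ha : a ∈ R) (hb : b ∈ R) (hu : u ∈ R) (hv : v ∈ R) (hab : a ≠ b)
    (hau : a ≠ u) (hav : a ≠ v) (hbu : b ≠ u) (hbv : b ≠ v) (huv : u ≠ v)
    (hc : d a u = d a v) : q a + q b ≤ n := by
  have hno : ∀ x ∈ R, ∀ y ∈ R, ∀ z ∈ R, ∀ w ∈ R, x ≠ y → x ≠ z → x ≠ w → y ≠ z → y ≠ w →
      z ≠ w → d x y = d x z → d x y = d x w → False := by
    intro x hx y hy z hz w hw hxy hxz hxw hyz hyw hzw h h'
    have hsub : {y, z, w} ⊆ {t ∈ R.erase x | d x t = d x y} := by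
      simp [insert_subset_iff, hy, hz, hw, Ne.symm hxy, Ne.symm hxz, Ne.symm hxw, ← h, ← h']
    have := (card_le_card hsub).trans (hthree x hx (d x y))
    rw [card_eq_three.2 ⟨y, z, w, hyz, hyw, hzw, rfl⟩] at this
    omega
  by_cases hua : d u a = d u b
  · exact add_le_of_forall_sum_le hmono hu ha hb hau.symm hbu.symm hab hua
  by_cases hva : d v a = d v b
  · exact add_le_of_forall_sum_le hmono hv ha hb hav.symm hbv.symm hab hva
  rw [hsymm u a] at hua
  rw [hsymm v a, ← hc] at hva
  have hub : d b u = d b v := by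
    rw [hsymm b u, hsymm b v]
    rcases eq_or_eq_or_eq_of_two_colors (hd u hu b hb hbu.symm) (hd v hv b hb hbv.symm)
      (hd a ha u hu hau) with h | h | h
    exacts [h, absurd h.symm hua, absurd h.symm hva]
  rcases eq_or_eq_or_eq_of_two_colors (hd a ha b hb hab) (hd a ha u hu hau)
    (hd b hb u hu hbu) with h | h | h
  · exact (hno a ha u hu v hv b hb hau hav hab huv hbu.symm hbv.symm hc h.symm).elim
  · rw [hsymm a b] at h
    exact (hno b hb u hu v hv a ha hbu hbv hab.symm huv hau.symm hav.symm hub h.symm).elim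
  · exact absurd (hsymm b u ▸ h) hua

lemma sum_le_of_card_eq_four [DecidableEq C] (hsymm : ∀ a b, d a b = d b a)
    (hd : ∀ a ∈ R, ∀ b ∈ R, a ≠ b → d a b = α ∨ d a b = β)
    (hthree : ∀ a ∈ R, ∀ μ, #{t ∈ R.erase a | d a t = μ} ≤ 2)
    (hmono : ∀ a ∈ R, ∀ μ, ∀ T ⊆ R.erase a, (∀ t ∈ T, d a t = μ) → ∑ t ∈ T, q t ≤ n)
    (hR : #R = 4) : ∑ r ∈ R, q r ≤ 2 * n := by
  obtain ⟨a, ha⟩ := card_pos.1 (by omega : 0 < #R)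
  obtain ⟨u, hu, v, hv, huv, hc⟩ := exists_ne_eq_of_two_lt_card (s := R.erase a)
    (fun t ht => hd a ha t (mem_of_mem_erase ht) (ne_of_mem_erase ht).symm)
    (by rw [card_erase_of_mem ha]; omega)
  obtain ⟨b, hb⟩ := card_eq_one.1 (by
    rw [card_erase_of_mem (mem_erase.2 ⟨Ne.symm huv, hv⟩), card_erase_of_mem hu,
      card_erase_of_mem ha, hR] : #(((R.erase a).erase u).erase v) = 1)
  have hbm : b ∈ ((R.erase a).erase u).erase v := hb ▸ mem_singleton_self b
  rw [← add_sum_erase R q ha, ← add_sum_erase _ q hu,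
    ← add_sum_erase _ q (mem_erase.2 ⟨Ne.symm huv, hv⟩), hb, sum_singleton]
  simp only [mem_erase] at hu hv hbm
  have := add_le_of_forall_sum_le hmono ha hu.2 hv.2 hu.1.symm hv.1.symm huv hc
  have := add_le_of_color_eq hsymm hd hthree hmono ha hbm.2.2.2 hu.2 hv.2 hbm.2.2.1.symm
    hu.1.symm hv.1.symm hbm.2.1 hbm.1 huv hc
  omega

lemma three_mul_sub_le_of_two_lt_card [DecidableEq C] {μ : C}
    (hd : ∀ a ∈ R, ∀ b ∈ R, a ≠ b → d a b = α ∨ d a b = β)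
    (hmono : ∀ a ∈ R, ∀ μ, ∀ T ⊆ R.erase a, (∀ t ∈ T, d a t = μ) → ∑ t ∈ T, q t ≤ n)
    (ha : a ∈ R) (hμ : 2 < #{t ∈ R.erase a | d a t = μ}) :
    3 * (∑ r ∈ R, q r - 2 * n) ≤ n := by
  obtain ⟨u, hu, v, hv, w, hw, huv, huw, hvw⟩ := two_lt_card.1 hμ
  have hsum := hmono a ha μ _ (filter_subset _ _) fun t ht => (mem_filter.1 ht).2
  have hsub : {u, v, w} ⊆ {t ∈ R.erase a | d a t = μ} := by simp [insert_subset_iff, *]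
  have := sum_le_sum_of_subset (f := q) hsub
  rw [sum_insert (by simp [huv, huw]), sum_pair hvw] at this
  have hR : ∀ t ∈ {t ∈ R.erase a | d a t = μ}, t ∈ R := fun t ht =>
    mem_of_mem_erase (mem_filter.1 ht).1
  have := sum_le_add_two_mul hd hmono (hR u hu)
  have := sum_le_add_two_mul hd hmono (hR v hv)
  have := sum_le_add_two_mul hd hmono (hR w hw)
  omega

lemma card_le_five_of_card_filter_le [DecidableEq C]
    (hd : ∀ a ∈ R, ∀ b ∈ R, a ≠ b → d a b = α ∨ d a b = β)
    (hthree : ∀ a ∈ R, ∀ μ, #{t ∈ R.erase a | d a t = μ} ≤ 2) (hR : R.Nonempty) : #R ≤ 5 := by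
  obtain ⟨a, ha⟩ := hR
  have hsplit : R.erase a ⊆ {t ∈ R.erase a | d a t = α} ∪ {t ∈ R.erase a | d a t = β} := by
    intro t ht
    rcases hd a ha t (mem_of_mem_erase ht) (ne_of_mem_erase ht).symm with h | h <;> simp [ht, h]
  have := (card_le_card hsplit).trans (card_union_le _ _)
  have := hthree a ha α
  have := hthree a ha β
  have := card_erase_of_mem ha
  omega

/-- Each vertex weighs at least `N - 2n`, as it sees at most `n` in each colour; so a vertex
seeing three others in one colour forces `3 (N - 2n) ≤ n`. Otherwise there are at most five
vertices, covered by two monochromatic cherries, or (for five) every pair being the leaves of a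
cherry. -/
theorem sum_le_of_two_coloring (hn : 4 ≤ n) (hR : 2 ≤ #R) (hsymm : ∀ a b, d a b = d b a)
    (hd : ∀ a ∈ R, ∀ b ∈ R, a ≠ b → d a b = α ∨ d a b = β)
    (hmono : ∀ a ∈ R, ∀ μ, ∀ T ⊆ R.erase a, (∀ t ∈ T, d a t = μ) → ∑ t ∈ T, q t ≤ n) :
    ∑ r ∈ R, q r ≤ 5 * (n / 2) + n % 2 := by
  classical
  by_cases hthree : ∀ a ∈ R, ∀ μ, #{t ∈ R.erase a | d a t = μ} ≤ 2
  swap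
  · push Not at hthree
    obtain ⟨a, ha, μ, hμ⟩ := hthree
    have := three_mul_sub_le_of_two_lt_card hd hmono ha hμ
    omega
  have hcard := card_le_five_of_card_filter_le hd hthree (card_pos.1 (by omega))
  interval_cases hp : #R
  · obtain ⟨a, b, hab, rfl⟩ := card_eq_two.1 hp
    have := le_of_forall_sum_le hmono (by simp) (by simp) hab
    have := le_of_forall_sum_le hmono (by simp) (by simp) hab.symm
    rw [sum_pair hab]
    omega
  · have := sum_le_of_card_eq_three hsymm hd hmono hp
    omega
  · have := sum_le_of_card_eq_four hsymm hd hthree hmono hp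
    omega
  · refine sum_le_of_card_eq_five hp fun a ha b hb hab => ?_
    obtain ⟨u, hu, v, hv, huv, hc⟩ := exists_ne_eq_of_two_lt_card (s := (R.erase a).erase b)
      (fun t ht => hd a ha t (mem_of_mem_erase (mem_of_mem_erase ht))
        (ne_of_mem_erase (mem_of_mem_erase ht)).symm)
      (by rw [card_erase_of_mem (mem_erase.2 ⟨Ne.symm hab, hb⟩), card_erase_of_mem ha]; omega)
    simp only [mem_erase] at hu hv
    exact add_le_of_color_eq hsymm hd hthree hmono ha hb hu.2.2 hv.2.2 hab hu.2.1.symm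
      hv.2.1.symm hu.1.symm hv.1.symm huv hc

end TwoColoring

lemma Equivalence.exists_finset_transversal {V : Type*} [Fintype V] [DecidableEq V]
    {r : V → V → Prop} (hr : Equivalence r) :
    ∃ R : Finset V, (∀ a ∈ R, ∀ b ∈ R, r a b → a = b) ∧ ∀ x, ∃ a ∈ R, r x a := by
  let s : Setoid V := ⟨r, hr⟩
  refine ⟨univ.image fun x => (Quotient.mk s x).out, ?_, fun x =>
    ⟨_, mem_image_of_mem _ (mem_univ x), hr.symm (Quotient.mk_out (s := s) x)⟩⟩
  simp only [mem_image, mem_univ, true_and]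
  rintro _ ⟨a, rfl⟩ _ ⟨b, rfl⟩ hab
  rw [← Quotient.out_eq (Quotient.mk s a), ← Quotient.out_eq (Quotient.mk s b)]
  exact congrArg _ (Quotient.sound hab)

section Components

variable {V C : Type*} [Fintype V] {c : V → V → C} {κ μ : C} {x y : V} {n m : ℕ}

open Classical in
noncomputable def colorComp (c : V → V → C) (κ : C) (x : V) : Finset V :=
  {y | ColorReach c κ univ x y}

@[simp] lemma mem_colorComp : y ∈ colorComp c κ x ↔ ColorReach c κ univ x y := by
  simp [colorComp]

lemma self_mem_colorComp (x : V) : x ∈ colorComp c κ x := mem_colorComp.2 (.refl x)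

lemma card_colorNbhd_lt_card_colorComp [DecidableEq V] [DecidableEq C] :
    #(colorNbhd c κ x) < #(colorComp c κ x) := by
  have hsub : insert x (colorNbhd c κ x) ⊆ colorComp c κ x := by
    intro y hy
    rcases mem_insert.1 hy with rfl | hy
    · exact self_mem_colorComp y
    · obtain ⟨hyx, hxy⟩ := mem_colorNbhd.1 hy
      exact mem_colorComp.2 (.single (mem_univ x) (mem_univ y) (Ne.symm hyx) hxy)
  simpa [card_insert_of_notMem] using card_le_card hsub

lemma card_le_of_forall_notMem_colorComp [DecidableEq V] [DecidableEq C] (hsym : IsSymmColoring c)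
    (hGal : ¬ HasRainbowTriangle c) (hDS : ¬ HasMonoDoubleStar c n m)
    (hx : m < #(colorComp c κ x)) {F : Finset V}
    (hF : ∀ z ∈ F, z ∉ colorComp c κ x ∧ c x z = μ) : #F ≤ n := by
  by_contra! hFn
  obtain ⟨y, hy⟩ := card_pos.1 (by omega : 0 < #F)
  obtain ⟨hyx, hxy⟩ := hF y hy
  have hne : x ≠ y := fun h => hyx (h ▸ self_mem_colorComp x)
  have hdisj : Disjoint (F.erase y) ((colorComp c κ x).erase x) :=
    disjoint_left.2 fun z hz hz' => (hF z (mem_of_mem_erase hz)).1 (mem_of_mem_erase hz')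
  refine hDS (hasMonoDoubleStar_of_le_card (X := F.erase y) (Y := (colorComp c κ x).erase x)
    hne (fun z hz => ?_) (fun z hz => ?_) ?_ ?_ ?_ ?_ ?_)
  · rw [(hF z (mem_of_mem_erase hz)).2, hxy]
  · have hxz := mem_colorComp.1 (mem_of_mem_erase hz)
    rw [hsym, hxz.color_eq hGal (mem_univ y) (mem_colorComp.not.1 hyx)]
  · simp only [mem_union, mem_erase, not_or]
    exact ⟨fun h => (hF x h.2).1 (self_mem_colorComp x), by simp⟩
  · simp [hyx]
  · have := pred_card_le_card_erase (s := F) (a := y)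
    omega
  · have := card_erase_of_mem (self_mem_colorComp (c := c) (κ := κ) x)
    omega
  · rw [card_union_of_disjoint hdisj, card_erase_of_mem hy,
      card_erase_of_mem (self_mem_colorComp x)]
    omega

lemma sum_card_colorComp_le [DecidableEq V] [DecidableEq C] (hsym : IsSymmColoring c)
    (hGal : ¬ HasRainbowTriangle c) (hDS : ¬ HasMonoDoubleStar c n m)
    (hx : m < #(colorComp c κ x)) {T : Finset V}
    (hT : ∀ t ∈ T, t ∉ colorComp c κ x ∧ c x t = μ)
    (hTT : ∀ t ∈ T, ∀ t' ∈ T, t ≠ t' → ¬ ColorReach c κ univ t t') :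
    ∑ t ∈ T, #(colorComp c κ t) ≤ n := by
  rw [← card_biUnion]
  · refine card_le_of_forall_notMem_colorComp (μ := μ) hsym hGal hDS hx fun z hz => ?_
    obtain ⟨t, ht, htz⟩ := mem_biUnion.1 hz
    have htz := mem_colorComp.1 htz
    obtain ⟨htx, hxt⟩ := hT t ht
    have htx' : ¬ ColorReach c κ univ t x := fun h => htx (mem_colorComp.2 (h.symm hsym))
    refine ⟨fun h => htx' (htz.trans ((mem_colorComp.1 h).symm hsym)), ?_⟩
    rw [hsym, htz.color_eq hGal (mem_univ x) htx', hsym, hxt]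
  · intro t ht t' ht' htt'
    refine disjoint_left.2 fun z hz hz' => hTT t ht t' ht' htt' ?_
    exact (mem_colorComp.1 hz).trans ((mem_colorComp.1 hz').symm hsym)

lemma sum_card_colorComp_eq [DecidableEq V] (hsym : IsSymmColoring c) {R : Finset V}
    (hR : ∀ a ∈ R, ∀ b ∈ R, ColorReach c κ univ a b → a = b)
    (hcover : ∀ x, ∃ a ∈ R, ColorReach c κ univ x a) :
    ∑ r ∈ R, #(colorComp c κ r) = Fintype.card V := by
  rw [← card_biUnion, ← card_univ]
  · congr 1
    refine eq_univ_of_forall fun x => ?_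
    obtain ⟨a, ha, hxa⟩ := hcover x
    exact mem_biUnion.2 ⟨a, ha, mem_colorComp.2 (hxa.symm hsym)⟩
  · intro a ha b hb hab
    refine disjoint_left.2 fun z hz hz' => hab (hR a ha b hb ?_)
    exact (mem_colorComp.1 hz).trans ((mem_colorComp.1 hz').symm hsym)

theorem card_le_of_forall_card_colorNbhd_le [DecidableEq V] {c : V → V → Fin 3}
    (hsym : IsSymmColoring c) (hGal : ¬ HasRainbowTriangle c) (hDS : ¬ HasMonoDoubleStar c n m)
    (hn : 4 ≤ n) (hV : 2 * n + 3 * m < Fintype.card V) (hdeg : ∀ u μ, #(colorNbhd c μ u) ≤ n + m) :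
    Fintype.card V ≤ 5 * (n / 2) + n % 2 := by
  obtain ⟨κ, x₀, -, y₀, -, h₀⟩ :=
    exists_not_colorReach hsym hGal (S := univ) (by rw [card_univ]; omega)
  obtain ⟨α, hκα, -⟩ := fin_three_exists_ne κ κ
  obtain ⟨β, hκβ, hαβ⟩ := fin_three_exists_ne κ α
  have hcomp : ∀ x, m < #(colorComp c κ x) := fun x => by
    have := card_colorNbhd_add_add c x hκα hκβ hαβ
    have := hdeg x α
    have := hdeg x β
    have := card_colorNbhd_lt_card_colorComp (c := c) (κ := κ) (x := x)
    omega
  obtain ⟨R, hR, hcover⟩ :=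
    (ColorReach.equivalence hsym (κ := κ) univ).exists_finset_transversal
  rw [← sum_card_colorComp_eq hsym hR hcover]
  refine sum_le_of_two_coloring (α := α) (β := β) hn ?_ hsym (fun a ha b hb hab => ?_)
    fun a ha μ T hT hTμ => ?_
  · obtain ⟨a, ha, hxa⟩ := hcover x₀
    obtain ⟨b, hb, hyb⟩ := hcover y₀
    refine one_lt_card.2 ⟨a, ha, b, hb, ?_⟩
    rintro rfl
    exact h₀ (hxa.trans (hyb.symm hsym))
  · have : c a b ≠ κ := fun h => hab (hR a ha b hb (.single (mem_univ a) (mem_univ b) hab h))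
    rcases fin_three_eq_or_eq_or_eq hκα hκβ hαβ (c a b) with h | h | h
    exacts [absurd h this, .inl h, .inr h]
  · refine sum_card_colorComp_le hsym hGal hDS (hcomp a) (fun t ht => ⟨fun h => ?_, hTμ t ht⟩)
      fun t ht t' ht' htt' h => htt' (hR t (mem_of_mem_erase (hT ht)) t'
        (mem_of_mem_erase (hT ht')) h)
    exact ne_of_mem_erase (hT ht) (hR a ha t (mem_of_mem_erase (hT ht)) (mem_colorComp.1 h)).symm

end Components

theorem hasRainbowTriangle_or_hasMonoDoubleStar {V : Type*} [Fintype V] [DecidableEq V]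
    {n m : ℕ} (hn : 6 * m + 7 ≤ n) (hV : 5 * (n / 2) + n % 2 < Fintype.card V)
    {c : V → V → Fin 3} (hsym : IsSymmColoring c) :
    HasRainbowTriangle c ∨ HasMonoDoubleStar c n m := by
  by_contra! h
  obtain ⟨hGal, hDS⟩ := h
  have := card_le_of_forall_card_colorNbhd_le hsym hGal hDS (by omega) (by omega)
    (card_colorNbhd_le_of_not_hasMonoDoubleStar hsym hDS hn hV)
  omega

section Blowup

variable {V P C : Type*} {n m : ℕ}

lemma not_hasMonoDoubleStar_of_card_colorNbhd_le [Fintype V] [DecidableEq V] [DecidableEq C]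
    {c : V → V → C} (h : ∀ u μ, #(colorNbhd c μ u) ≤ n) : ¬ HasMonoDoubleStar c n m := by
  rintro ⟨u, v, A, -, μ, huv, hA, -, -, huA, -, hvA, -, hc, hAc, -⟩
  have hsub : insert v A ⊆ colorNbhd c μ u := by
    intro x hx
    rcases mem_insert.1 hx with rfl | hx
    · exact mem_colorNbhd.2 ⟨Ne.symm huv, hc⟩
    · exact mem_colorNbhd.2 ⟨fun h => huA (h ▸ hx), hAc x hx⟩
  have := card_le_card hsub
  rw [card_insert_of_notMem hvA, hA] at this
  have := h u μ
  omega

lemma not_hasRainbowTriangle_comp {f : P → P → C} {α β : C} (hf : ∀ i j, f i j = f j i)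
    (hoff : ∀ i j, i ≠ j → f i j = α ∨ f i j = β) (π : V → P) :
    ¬ HasRainbowTriangle fun x y => f (π x) (π y) := by
  rintro ⟨u, v, w, -, -, -, h₁, h₂, h₃⟩
  simp only at h₁ h₂ h₃
  by_cases huv : π u = π v
  · exact h₃ (by rw [huv])
  by_cases huw : π u = π w
  · exact h₂ (by rw [huw, hf])
  by_cases hvw : π v = π w
  · exact h₁ (by rw [hvw])
  rcases eq_or_eq_or_eq_of_two_colors (hoff _ _ huv) (hoff _ _ huw) (hoff _ _ hvw) with h | h | h
  exacts [h₁ h, h₂ h, h₃ h]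

lemma card_colorNbhd_comp_le [Fintype V] [DecidableEq V] [DecidableEq P] [DecidableEq C]
    {f : P → P → C} (hf : ∀ i μ, ∃ a b, ∀ j, f i j = μ → j = a ∨ j = b) {π : V → P}
    (hπ : ∀ a b, #{x | π x = a ∨ π x = b} ≤ n) (u : V) (μ : C) :
    #(colorNbhd (fun x y => f (π x) (π y)) μ u) ≤ n := by
  obtain ⟨a, b, hab⟩ := hf (π u) μ
  refine le_trans (card_le_card fun x hx => ?_) (hπ a b)
  simpa using hab _ (mem_colorNbhd.1 hx).2

end Blowup

/-- Colour `2` inside the parts; between parts, colour `0` along the pentagon `i ~ i ± 1` and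
colour `1` along the pentagram `i ~ i ± 2`. -/
def pentagonColor (i j : Fin 5) : Fin 3 :=
  if i = j then 2 else if i - j = 1 ∨ j - i = 1 then 0 else 1

lemma card_filter_mod_five_le (s e i : ℕ) (he : e ≤ 1) :
    #{x : Fin (5 * s + e) | x.val % 5 = i} ≤ s + if i = 0 then e else 0 := by
  have hmod : ∀ x ∈ ({x : Fin (5 * s + e) | x.val % 5 = i} : Finset _), x.val % 5 = i :=
    fun x hx => (mem_filter.1 hx).2
  simpa using card_le_card_of_injOn (t := range (s + if i = 0 then e else 0))
    (fun x : Fin (5 * s + e) => x.val / 5)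
    (fun x hx => by
      have := hmod x hx
      have := x.isLt
      simp only [mem_coe, mem_range]
      split_ifs <;> omega)
    (fun x hx y hy hxy => by
      have := hmod x hx
      have := hmod y hy
      exact Fin.ext (by simp only at hxy; omega))

theorem grAvoid_three (n m : ℕ) : grAvoid 3 n m (5 * (n / 2) + n % 2) := by
  let π : Fin (5 * (n / 2) + n % 2) → Fin 5 :=
    fun x => ⟨x.val % 5, Nat.mod_lt _ (by norm_num)⟩
  have hpart : ∀ a : Fin 5, #{x | π x = a} ≤ n / 2 + if a.val = 0 then n % 2 else 0 := by
    intro a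
    simpa only [Fin.ext_iff] using card_filter_mod_five_le (n / 2) (n % 2) a.val (by omega)
  refine ⟨fun x y => pentagonColor (π x) (π y), fun x y => ?_,
    not_hasRainbowTriangle_comp (α := 0) (β := 1) (by decide) (by decide) π,
    not_hasMonoDoubleStar_of_card_colorNbhd_le
      (card_colorNbhd_comp_le (by decide) fun a b => ?_)⟩
  · exact (by decide : ∀ i j, pentagonColor i j = pentagonColor j i) _ _
  rw [filter_or]
  have ha := hpart a
  have hb := hpart b
  by_cases hab : a = b
  · subst hab
    rw [union_self]
    split_ifs at ha <;> omega
  · have := card_union_le {x | π x = a} {x | π x = b}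
    have : a.val ≠ 0 ∨ b.val ≠ 0 := by omega
    split_ifs at ha hb <;> omega

theorem stmt_10_general (n m : ℕ) (hn : 6 * m + 7 ≤ n) :
    (∀ N, (if Even n then 5 * (n / 2) + 1 else 5 * ((n - 1) / 2) + 2) ≤ N →
      grHolds 3 n m N) ∧
    grAvoid 3 n m ((if Even n then 5 * (n / 2) + 1 else 5 * ((n - 1) / 2) + 2) - 1) := by
  have hthreshold : (if Even n then 5 * (n / 2) + 1 else 5 * ((n - 1) / 2) + 2) =
      5 * (n / 2) + n % 2 + 1 := by
    split_ifs with h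
    · rw [Nat.even_iff] at h; omega
    · rw [Nat.not_even_iff] at h; omega
  rw [hthreshold, Nat.add_sub_cancel]
  refine ⟨fun N hN c hsym => hasRainbowTriangle_or_hasMonoDoubleStar hn ?_ hsym,
    grAvoid_three n m⟩
  rw [Fintype.card_fin]
  omega

/-- For n ≥ 6m+7 and m ≥ 1, `gr_3(K_3 : S(n,m))` equals `5(n/2)+1` for even `n`
and `5((n-1)/2)+2` for odd `n`. -/
theorem stmt_10 (n m : ℕ) (hm : 1 ≤ m) (hn : 6 * m + 7 ≤ n) :
    (∀ N, (if Even n then 5 * (n / 2) + 1 else 5 * ((n - 1) / 2) + 2) ≤ N →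
      grHolds 3 n m N) ∧
    grAvoid 3 n m ((if Even n then 5 * (n / 2) + 1 else 5 * ((n - 1) / 2) + 2) - 1) :=
  stmt_10_general n m hn
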